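/- arXiv:2207.04521 — 3 statements merged into one kernel-verified Lean document; each statement's English description precedes it below -/
import Mathlib

section
/- For any u > 0, the unique solution a ∈ [1, ∞) of a − ln(a) = u + 1 satisfies a < 1 + √(2u) + u. -/
theorem sub_log_solution_upper (u a : ℝ) (hu : 0 < u) (ha : 1 ≤ a)
    (heq : a - Real.log a = u + 1) :
    a < 1 + Real.sqrt (2 * u) + u := by
  set s := Real.sqrt (2 * u) with hs_def
  have hs : 0 < s := Real.sqrt_pos.mpr (by linarith)
  have hs2 : s ^ 2 = 2 * u := Real.sq_sqrt (by linarith)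
  set b := 1 + s + u with hb_def
  have hb1 : 1 < b := by nlinarith
  -- b < exp s
  have hsum := Real.sum_le_exp_of_nonneg hs.le 4
  have hsum' : 1 + s + s ^ 2 / 2 + s ^ 3 / 6 ≤ Real.exp s := by
    convert hsum using 1
    simp [Finset.sum_range_succ, Nat.factorial]
  have hbexp : b < Real.exp s := by nlinarith [pow_pos hs 3]
  have hlog : Real.log b < s := by
    have := Real.log_lt_log (by linarith) hbexp
    rwa [Real.log_exp] at this
  -- hence b - log b > u + 1
  have hfb : u + 1 < b - Real.log b := by
    simp only [hb_def]; linarith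
  by_contra hcon
  push_neg at hcon
  -- f monotone: a ≥ b ≥ 1 implies a - log a ≥ b - log b
  have hmono : b - Real.log b ≤ a - Real.log a := by
    have hba : Real.log a - Real.log b ≤ a - b := by
      have h1 : Real.log (a / b) ≤ a / b - 1 :=
        Real.log_le_sub_one_of_pos (by positivity)
      rw [Real.log_div (by linarith) (by linarith)] at h1
      have h2 : a / b - 1 ≤ a - b := by
        rw [div_sub_one (by linarith), div_le_iff₀ (by linarith)]
        nlinarith
      linarith
    linarith
  linarith
end

section
/- For any u > 0, the unique solution a ∈ [1, ∞) of a − ln(a) = u + 1 satisfies a > 1 + √(2u) + (2/3)·u. -/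
/-!
Put `s = √(2u)` and `b = 1 + s + s²/3 = 1 + √(2u) + (2/3)u`. Since
`log b - (s - s²/6)` vanishes at `s = 0` and has derivative `s³/(9b) > 0`, we get
`log b > s - s²/6`, hence `b - log b < 1 + s²/2 = a - log a`. As `x ↦ x - log x` is strictly
increasing on `[1, ∞)` and `a, b ≥ 1`, this forces `b < a`.
-/

open Real Set

theorem strictMonoOn_sub_log : StrictMonoOn (fun x : ℝ => x - log x) (Ici 1) := by
  intro x (hx : 1 ≤ x) y (hy : 1 ≤ y) hxy
  have hx0 : 0 < x := by linarith
  have hlog : log (y / x) < y / x - 1 :=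
    log_lt_sub_one_of_pos (by positivity) (by rw [Ne, div_eq_one_iff_eq hx0.ne']; exact hxy.ne')
  have hdiv : y / x - 1 ≤ y - x := by
    rw [div_sub_one hx0.ne']
    exact div_le_self (by linarith) hx
  rw [log_div (by positivity) hx0.ne'] at hlog
  show x - log x < y - log y
  linarith

theorem sub_sq_div_six_lt_log {s : ℝ} (hs : 0 < s) : s - s ^ 2 / 6 < log (1 + s + s ^ 2 / 3) := by
  have hq : ∀ x : ℝ, 0 < 1 + x + x ^ 2 / 3 := fun x => by nlinarith [sq_nonneg (x + 3 / 2)]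
  let g : ℝ → ℝ := fun x => log (1 + x + x ^ 2 / 3) - x + x ^ 2 / 6
  have hg : StrictMonoOn g (Ici 0) := by
    refine strictMonoOn_of_deriv_pos (convex_Ici 0) ?_ fun x hx => ?_
    · exact ContinuousOn.add (ContinuousOn.sub
        (ContinuousOn.log (by fun_prop) fun x _ => (hq x).ne') (by fun_prop)) (by fun_prop)
    rw [interior_Ici, mem_Ioi] at hx
    have hderiv : HasDerivAt g
        ((1 + 2 * x / 3) / (1 + x + x ^ 2 / 3) - 1 + x / 3) x := by
      have hpoly : HasDerivAt (fun x : ℝ => 1 + x + x ^ 2 / 3) (1 + 2 * x / 3) x :=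
        (((hasDerivAt_id' x).const_add 1).add ((hasDerivAt_pow 2 x).div_const 3)).congr_deriv
          (by norm_num)
      exact (((hpoly.log (hq x).ne').sub (hasDerivAt_id' x)).add
        ((hasDerivAt_pow 2 x).div_const 6)).congr_deriv (by norm_num; ring)
    have hval : (1 + 2 * x / 3) / (1 + x + x ^ 2 / 3) - 1 + x / 3
        = x ^ 3 / (9 * (1 + x + x ^ 2 / 3)) := by
      field_simp [(hq x).ne']
      ring
    rw [hderiv.deriv, hval]
    have := hq x
    positivity
  have hg0 : g 0 < g s := hg self_mem_Ici hs.le hs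
  norm_num [g] at hg0
  linarith

theorem sub_log_solution_lower (u a : ℝ) (hu : 0 < u) (ha : 1 ≤ a)
    (heq : a - Real.log a = u + 1) :
    a > 1 + Real.sqrt (2 * u) + (2 / 3) * u := by
  set s := √(2 * u)
  have hs : 0 < s := sqrt_pos.mpr (by linarith)
  have hs2 : s ^ 2 = 2 * u := sq_sqrt (by linarith)
  have hb : 1 + s + 2 / 3 * u = 1 + s + s ^ 2 / 3 := by rw [hs2]; ring
  have hlog := sub_sq_div_six_lt_log hs
  rw [← hb] at hlog
  have hlt : (1 + s + 2 / 3 * u) - log (1 + s + 2 / 3 * u) < a - log a := by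
    rw [heq]; linarith
  exact (strictMonoOn_sub_log.lt_iff_lt (show (1 : ℝ) ≤ 1 + s + 2 / 3 * u by linarith) ha).mp hlt
end

section
/- Let n be a positive integer, ε > 0, and let a ≥ 1 satisfy a − ln(a) = 4ε²/n + 1. Then the quantity I = (n/2)·ln(a) satisfies I < 2√2·ε·√n. -/
theorem srl_bound (n : ℕ) (hn : 0 < n) (ε a : ℝ) (hε : 0 < ε) (ha : 1 ≤ a)
    (heq : a - Real.log a = 4 * ε ^ 2 / n + 1) :
    (n / 2 : ℝ) * Real.log a < 2 * Real.sqrt 2 * ε * Real.sqrt n := by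
  have hn' : (0 : ℝ) < n := by exact_mod_cast hn
  set s := Real.sqrt a with hs
  have ha0 : (0 : ℝ) < a := lt_of_lt_of_le one_pos ha
  have hs1 : 1 ≤ s := by
    rw [hs, show (1:ℝ) = Real.sqrt 1 by simp]
    exact Real.sqrt_le_sqrt ha
  have hs2 : s * s = a := Real.mul_self_sqrt (le_of_lt ha0)
  have hlog : Real.log a ≤ 2 * (s - 1) := by
    have h1 : Real.log s ≤ s - 1 := Real.log_le_sub_one_of_pos (lt_of_lt_of_le one_pos hs1)
    have h2 : Real.log s = Real.log a / 2 := Real.log_sqrt (le_of_lt ha0)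
    linarith [h1, h2.symm.le, h2.le]
  have hlog0 : 0 ≤ Real.log a := Real.log_nonneg ha
  -- (s-1)^2 ≤ 4 ε^2 / n
  have hkey : (s - 1) ^ 2 ≤ 4 * ε ^ 2 / n := by nlinarith [hs2]
  have hsn : Real.sqrt n * Real.sqrt n = n := Real.mul_self_sqrt (le_of_lt hn')
  have hsn0 : 0 < Real.sqrt n := Real.sqrt_pos.mpr hn'
  -- (s-1) * √n ≤ 2ε
  have hkey' : (s - 1) ^ 2 * n ≤ 4 * ε ^ 2 := by
    rw [← le_div_iff₀ hn']
    exact hkey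
  have h3 : (s - 1) * Real.sqrt n ≤ 2 * ε := by
    nlinarith [mul_nonneg (sub_nonneg.mpr hs1) hsn0.le, hkey', hsn, hε]
  have hsq2 : 1 < Real.sqrt 2 := by
    rw [show (1:ℝ) = Real.sqrt 1 by simp]
    exact Real.sqrt_lt_sqrt (by norm_num) (by norm_num)
  have h4 : (n / 2 : ℝ) * Real.log a ≤ 2 * ε * Real.sqrt n := by
    have : (n : ℝ) * (s - 1) ≤ 2 * ε * Real.sqrt n := by
      nlinarith [mul_le_mul_of_nonneg_left h3 hsn0.le, hsn]
    nlinarith [hlog]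
  have h5 : 2 * ε * Real.sqrt n < 2 * Real.sqrt 2 * ε * Real.sqrt n := by
    nlinarith [mul_pos hε hsn0]
  linarith
end
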